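/- Define g(r) = 1 - r - 2·Φ⁻¹(1 - r/2)·φ(Φ⁻¹(1 - r/2)) for r ∈ (0, 1). Then g is strictly decreasing in r, i.e., retaining more components yields strictly smaller theoretical sparsification error. -/

import Mathlib

open MeasureTheory ProbabilityTheory

/-- The standard Gaussian probability density function. -/
noncomputable def phi (t : ℝ) : ℝ := (Real.sqrt (2 * Real.pi))⁻¹ * Real.exp (-t ^ 2 / 2)

/-- The standard Gaussian cumulative distribution function. -/
noncomputable def Phi (t : ℝ) : ℝ := ((gaussianReal 0 1) (Set.Iic t)).toReal

/-- The standard Gaussian quantile function. -/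
noncomputable def PhiInv : ℝ → ℝ := Function.invFun Phi

/-- The squared distributional relative error of top-k sparsification at
retention fraction `r`. -/
noncomputable def g (r : ℝ) : ℝ :=
  1 - r - 2 * PhiInv (1 - r / 2) * phi (PhiInv (1 - r / 2))

lemma phi_eq : phi = gaussianPDFReal 0 1 := by
  funext x
  simp [phi, gaussianPDFReal, neg_div]

lemma phi_pos (x : ℝ) : 0 < phi x := by
  rw [phi_eq]; exact gaussianPDFReal_pos 0 1 x one_ne_zero

lemma phi_continuous : Continuous phi := by
  unfold phi; continuity

lemma phi_integrable : Integrable phi := by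
  rw [phi_eq]; exact integrable_gaussianPDFReal 0 1

lemma phi_integral : ∫ x, phi x = 1 := by
  rw [phi_eq]; exact integral_gaussianPDFReal_eq_one 0 one_ne_zero

lemma Phi_eq (t : ℝ) : Phi t = ∫ x in Set.Iic t, phi x := by
  rw [Phi, gaussianReal_apply_eq_integral 0 one_ne_zero, ← phi_eq,
    ENNReal.toReal_ofReal]
  exact setIntegral_nonneg measurableSet_Iic fun x _ => (phi_pos x).le

lemma Phi_sub (a b : ℝ) : Phi b - Phi a = ∫ x in a..b, phi x := by
  rw [Phi_eq, Phi_eq]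
  exact intervalIntegral.integral_Iic_sub_Iic (phi_integrable.integrableOn) (phi_integrable.integrableOn)

lemma Phi_strictMono : StrictMono Phi := by
  intro a b hab
  have : 0 < ∫ x in a..b, phi x :=
    intervalIntegral.intervalIntegral_pos_of_pos_on
      (phi_integrable.intervalIntegrable) (fun x _ => phi_pos x) hab
  linarith [Phi_sub a b]

lemma hasDerivAt_Phi (t : ℝ) : HasDerivAt Phi (phi t) t := by
  have h : HasDerivAt (fun u => ∫ x in (0:ℝ)..u, phi x) (phi t) t :=
    intervalIntegral.integral_hasDerivAt_right
      (phi_integrable.intervalIntegrable)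
      phi_continuous.stronglyMeasurable.stronglyMeasurableAtFilter
      phi_continuous.continuousAt
  have : Phi = fun u => Phi 0 + ∫ x in (0:ℝ)..u, phi x := by
    funext u
    have := Phi_sub 0 u
    linarith
  rw [this]
  simpa using h.const_add (Phi 0)

lemma Phi_continuous : Continuous Phi :=
  continuous_iff_continuousAt.mpr fun t => (hasDerivAt_Phi t).continuousAt

lemma Phi_zero : Phi 0 = 1 / 2 := by
  have hsym : ∫ x in Set.Ioi (0:ℝ), phi x = ∫ x in Set.Iic (0:ℝ), phi x := by
    have h := integral_comp_neg_Ioi (c := (0:ℝ)) (f := phi)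
    simp only [neg_zero] at h
    rw [← h]
    congr 1
    funext x
    simp [phi, neg_pow]
  have hsplit : (∫ x in Set.Iic (0:ℝ), phi x) + ∫ x in Set.Ioi (0:ℝ), phi x = 1 := by
    rw [intervalIntegral.integral_Iic_add_Ioi phi_integrable.integrableOn
      phi_integrable.integrableOn, phi_integral]
  rw [Phi_eq]; linarith

lemma Phi_tendsto_one : Filter.Tendsto Phi Filter.atTop (nhds 1) := by
  have h := tendsto_measure_Iic_atTop (gaussianReal 0 1)
  simp only [measure_univ] at h
  have := (ENNReal.tendsto_toReal (by norm_num : (1:ENNReal) ≠ ⊤)).comp h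
  exact this

lemma Phi_surj_on {y : ℝ} (hy1 : 1 / 2 < y) (hy2 : y < 1) : ∃ t > 0, Phi t = y := by
  obtain ⟨T, hT⟩ : ∃ T, y < Phi T := (Phi_tendsto_one.eventually_const_lt hy2).exists
  have h0T : (0:ℝ) ≤ T := by
    by_contra h
    push_neg at h
    have := Phi_strictMono h
    rw [Phi_zero] at this
    linarith
  obtain ⟨t, ht, hPt⟩ := intermediate_value_Icc h0T Phi_continuous.continuousOn
    (Set.mem_Icc.mpr ⟨by rw [Phi_zero]; linarith, hT.le⟩)
  refine ⟨t, ?_, hPt⟩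
  rcases lt_or_eq_of_le ht.1 with h | h
  · exact h
  · exfalso; rw [← h, Phi_zero] at hPt; linarith

lemma PhiInv_eq {t y : ℝ} (h : Phi t = y) : PhiInv y = t :=
  Phi_strictMono.injective (by rw [PhiInv, Function.invFun_eq ⟨t, h⟩, h])

/-- Auxiliary function: `g` expressed via the quantile. -/
noncomputable def hfun (t : ℝ) : ℝ := 2 * Phi t - 1 - 2 * t * phi t

lemma hasDerivAt_phi (t : ℝ) : HasDerivAt phi (-t * phi t) t := by
  have h1 : HasDerivAt (fun x : ℝ => -x ^ 2 / 2) (-t) t := by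
    have h0 : HasDerivAt (fun x : ℝ => -x ^ 2 / 2) (-(2 * t ^ 1) / 2) t :=
      (((hasDerivAt_pow 2 t).neg).div_const 2)
    convert h0 using 1
    ring
  have h2 := (h1.exp).const_mul (Real.sqrt (2 * Real.pi))⁻¹
  have : phi = fun x => (Real.sqrt (2 * Real.pi))⁻¹ * Real.exp (-x ^ 2 / 2) := rfl
  rw [this]
  refine h2.congr_deriv ?_
  beta_reduce
  ring

lemma hasDerivAt_hfun (t : ℝ) : HasDerivAt hfun (2 * t ^ 2 * phi t) t := by
  have h1 := (hasDerivAt_Phi t).const_mul 2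
  have h2 := ((hasDerivAt_id t).mul (hasDerivAt_phi t)).const_mul 2
  have := (h1.sub_const 1).sub h2
  have heq : hfun = fun t => 2 * Phi t - 1 - 2 * (t * phi t) := by
    funext t; simp [hfun]; ring
  rw [heq]
  refine this.congr_deriv ?_
  simp only [id_eq]
  ring

lemma hfun_strictMonoOn : StrictMonoOn hfun (Set.Ici 0) := by
  apply strictMonoOn_of_deriv_pos (convex_Ici 0)
    (fun t _ => (hasDerivAt_hfun t).continuousAt.continuousWithinAt)
  intro t ht
  rw [interior_Ici] at ht
  rw [(hasDerivAt_hfun t).deriv]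
  have hp := phi_pos t
  have : (0:ℝ) < t := ht
  positivity

/-- `g` is strictly decreasing on `(0,1)`: retaining more components yields
strictly smaller theoretical sparsification error. -/
theorem stmt_7 : StrictAntiOn g (Set.Ioo (0 : ℝ) 1) := by
  intro r1 hr1 r2 hr2 h12
  obtain ⟨hr11, hr12⟩ := hr1
  obtain ⟨hr21, hr22⟩ := hr2
  obtain ⟨t1, ht1pos, ht1⟩ := Phi_surj_on (y := 1 - r1 / 2) (by linarith) (by linarith)
  obtain ⟨t2, ht2pos, ht2⟩ := Phi_surj_on (y := 1 - r2 / 2) (by linarith) (by linarith)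
  have key : ∀ (r t : ℝ), Phi t = 1 - r / 2 → g r = hfun t := by
    intro r t ht
    rw [g, PhiInv_eq ht, hfun, ht]
    ring
  rw [key r1 t1 ht1, key r2 t2 ht2]
  have ht21 : t2 < t1 := by
    by_contra h
    push_neg at h
    have := Phi_strictMono.le_iff_le.mpr h
    rw [ht1, ht2] at this
    linarith
  exact hfun_strictMonoOn ht2pos.le ht1pos.le ht21
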